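/- Let (A, ≻_A, ≺_A, Δ_≻, Δ_≺) be a finite-dimensional anti-dendriform bialgebra with double D = A ⊕ A*, and r = Σᵢ eᵢ ⊗ eᵢ* ∈ D⊗D for a basis {eᵢ} of A with dual basis {eᵢ*}. Then r + τ(r) is invariant in (D, ≻_D, ≺_D) and T_{r+τ(r)} : D* → D, given by T_{r+τ(r)}(ζ, x) = (ζ, -x) under the identification D* ≅ A*⊕A, is a linear isomorphism; hence (D, ≻_D, ≺_D, Δ_{≻,r}, Δ_{≺,r}) is a factorizable anti-dendriform bialgebra. -/

import Mathlib

/-!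
Let `⟨(x, a), (y, c)⟩ = a y + c x` be the natural pairing on `D = A ⊕ A*`. The map
`T_{r + τ(r)}` is the inverse of the isomorphism `D ≅ D*` given by this pairing, i.e.
`r + τ(r)` is its Casimir element. This gives bijectivity at once, and it turns the invariance
of `r + τ(r)` into the identities `⟨v, w ≺ u⟩ = -⟨u · v, w⟩` and `⟨v, w · u⟩ = -⟨u ≻ v, w⟩`,
which is exactly what the coadjoint terms in `≻_D` and `≺_D` are designed for. The
Yang–Baxter equation for `r` is checked coordinatewise in the basis `{eᵢ, eᵢ*}` of `D`.
-/

open TensorProduct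

set_option synthInstance.maxHeartbeats 1000000
set_option maxHeartbeats 1600000

variable {K : Type*} [Field K]

/-- The anti-dendriform algebra identities for two bilinear operations `s` (≻) and `p` (≺):
`x≻(y≻z) = -(x·y)≻z = -x≺(y·z) = (x≺y)≺z` and `(x≻y)≺z = x≻(y≺z)`, where `x·y = x≻y + x≺y`. -/
def IsAntiDend {M : Type*} [AddCommGroup M] [Module K M]
    (s p : M →ₗ[K] M →ₗ[K] M) : Prop :=
  ∀ x y z : M,
    s x (s y z) = - s (s x y + p x y) z ∧
    s x (s y z) = - p x (s y z + p y z) ∧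
    s x (s y z) = p (p x y) z ∧
    p (s x y) z = s x (p y z)

/-- The bilinear map `a ⊗ b ↦ (ζ ↦ ζ(a) • b)` used to define `T_r`. -/
noncomputable def Tbil {M : Type*} [AddCommGroup M] [Module K M] :
    M →ₗ[K] M →ₗ[K] (Module.Dual K M →ₗ[K] M) :=
  LinearMap.mk₂ K (fun a b => (Module.Dual.eval K M a).smulRight b)
    (fun a a' b => by ext ζ; simp [add_smul])
    (fun c a b => by
      ext ζ
      simp only [LinearMap.smulRight_apply, LinearMap.smul_apply, map_smul,
        Module.Dual.eval_apply, smul_eq_mul, mul_smul])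
    (fun a b b' => by ext ζ; simp)
    (fun c a b => by
      ext ζ
      simp only [LinearMap.smulRight_apply, LinearMap.smul_apply]
      exact smul_comm _ _ _)

/-- `T_r : A* → A`, `⟨T_r ζ, η⟩ = ⟨r, ζ ⊗ η⟩`; concretely `T_r ζ = Σ ζ(aᵢ) • bᵢ`
for `r = Σ aᵢ ⊗ bᵢ`. -/
noncomputable def TmL {M : Type*} [AddCommGroup M] [Module K M] (r : M ⊗[K] M) :
    Module.Dual K M →ₗ[K] M :=
  TensorProduct.lift Tbil r

/-- The flip `τ : A ⊗ A → A ⊗ A`. -/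
noncomputable def tau {M : Type*} [AddCommGroup M] [Module K M] (r : M ⊗[K] M) : M ⊗[K] M :=
  TensorProduct.comm K M M r

/-- `r` is invariant: `(R_≺(x)⊗I + I⊗L_·(x)) r = 0` and `(R_·(x)⊗I + I⊗L_≻(x)) r = 0`. -/
def Invariant {M : Type*} [AddCommGroup M] [Module K M]
    (s p : M →ₗ[K] M →ₗ[K] M) (r : M ⊗[K] M) : Prop :=
  ∀ x : M,
    TensorProduct.map (p.flip x) (LinearMap.id : M →ₗ[K] M) r
      + TensorProduct.map (LinearMap.id : M →ₗ[K] M) ((s + p) x) r = 0 ∧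
    TensorProduct.map ((s + p).flip x) (LinearMap.id : M →ₗ[K] M) r
      + TensorProduct.map (LinearMap.id : M →ₗ[K] M) (s x) r = 0

/-- `(a⊗b)⊗(c⊗d) ↦ (m a c) ⊗ b ⊗ d` : the product is placed in the first tensor slot,
giving `r₁₂ ∗ r₁₃` when applied to `r ⊗ r`. -/
noncomputable def place1 {M : Type*} [AddCommGroup M] [Module K M]
    (m : M →ₗ[K] M →ₗ[K] M) :
    (M ⊗[K] M) ⊗[K] (M ⊗[K] M) →ₗ[K] M ⊗[K] (M ⊗[K] M) :=
  (TensorProduct.map (TensorProduct.lift m)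
      (LinearMap.id : M ⊗[K] M →ₗ[K] M ⊗[K] M)) ∘ₗ
    (TensorProduct.tensorTensorTensorComm K M M M M).toLinearMap

/-- `(a⊗b)⊗(c⊗d) ↦ c ⊗ (m a d) ⊗ b` : the product in the second slot, giving `r₂₃ ∗ r₁₂`. -/
noncomputable def place2 {M : Type*} [AddCommGroup M] [Module K M]
    (m : M →ₗ[K] M →ₗ[K] M) :
    (M ⊗[K] M) ⊗[K] (M ⊗[K] M) →ₗ[K] M ⊗[K] (M ⊗[K] M) :=
  (TensorProduct.leftComm K M M M).toLinearMap ∘ₗ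
  (TensorProduct.map (LinearMap.id : M →ₗ[K] M) (TensorProduct.comm K M M).toLinearMap) ∘ₗ
  (TensorProduct.map (TensorProduct.lift m)
      (LinearMap.id : M ⊗[K] M →ₗ[K] M ⊗[K] M)) ∘ₗ
  (TensorProduct.tensorTensorTensorComm K M M M M).toLinearMap ∘ₗ
  (TensorProduct.congr (LinearEquiv.refl K (M ⊗[K] M)) (TensorProduct.comm K M M)).toLinearMap

/-- `(a⊗b)⊗(c⊗d) ↦ a ⊗ c ⊗ (m b d)` : the product in the third slot, giving `r₁₃ ∗ r₂₃`. -/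
noncomputable def place3 {M : Type*} [AddCommGroup M] [Module K M]
    (m : M →ₗ[K] M →ₗ[K] M) :
    (M ⊗[K] M) ⊗[K] (M ⊗[K] M) →ₗ[K] M ⊗[K] (M ⊗[K] M) :=
  (TensorProduct.assoc K M M M).toLinearMap ∘ₗ
  (TensorProduct.map (LinearMap.id : M ⊗[K] M →ₗ[K] M ⊗[K] M) (TensorProduct.lift m)) ∘ₗ
  (TensorProduct.tensorTensorTensorComm K M M M M).toLinearMap

/-- `D(r) = r₁₂·r₁₃ + r₂₃≻r₁₂ - r₁₃≺r₂₃`. -/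
noncomputable def adD {M : Type*} [AddCommGroup M] [Module K M]
    (s p : M →ₗ[K] M →ₗ[K] M) (r : M ⊗[K] M) : M ⊗[K] (M ⊗[K] M) :=
  place1 (s + p) (r ⊗ₜ[K] r) + place2 s (r ⊗ₜ[K] r) - place3 p (r ⊗ₜ[K] r)

/-- `D₁(r) = r₂₃·r₁₂ + r₁₃≻r₂₃ + r₁₂≺r₁₃`. -/
noncomputable def adD1 {M : Type*} [AddCommGroup M] [Module K M]
    (s p : M →ₗ[K] M →ₗ[K] M) (r : M ⊗[K] M) : M ⊗[K] (M ⊗[K] M) :=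
  place2 (s + p) (r ⊗ₜ[K] r) + place3 s (r ⊗ₜ[K] r) + place1 p (r ⊗ₜ[K] r)

/-- `D₂(r) = r₁₃·r₂₃ - r₁₂≻r₁₃ + r₂₃≺r₁₂`. -/
noncomputable def adD2 {M : Type*} [AddCommGroup M] [Module K M]
    (s p : M →ₗ[K] M →ₗ[K] M) (r : M ⊗[K] M) : M ⊗[K] (M ⊗[K] M) :=
  place3 (s + p) (r ⊗ₜ[K] r) - place1 s (r ⊗ₜ[K] r) + place2 p (r ⊗ₜ[K] r)

/-- The anti-dendriform Yang-Baxter equation `D(r) = 0`. -/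
noncomputable def AYBE {M : Type*} [AddCommGroup M] [Module K M]
    (s p : M →ₗ[K] M →ₗ[K] M) (r : M ⊗[K] M) : Prop :=
  adD s p r = 0

section Double

variable (A : Type*) [AddCommGroup A] [Module K A] [FiniteDimensional K A]

/-- For an operation `m` on `A*`, the coadjoint operator `a ↦ R_m(a)*` acting on
`A ≅ A**`. -/
noncomputable def RstarB
    (m : Module.Dual K A →ₗ[K] Module.Dual K A →ₗ[K] Module.Dual K A) :
    Module.Dual K A →ₗ[K] (A →ₗ[K] A) :=
  (((Module.evalEquiv K A).symm.conj).toLinearMap :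
      Module.End K (Module.Dual K (Module.Dual K A)) →ₗ[K] Module.End K A) ∘ₗ
    (Module.Dual.transpose :
      (Module.Dual K A →ₗ[K] Module.Dual K A) →ₗ[K]
        (Module.Dual K (Module.Dual K A) →ₗ[K] Module.Dual K (Module.Dual K A))) ∘ₗ
    m.flip

/-- For an operation `m` on `A*`, the coadjoint operator `a ↦ L_m(a)*` acting on
`A ≅ A**`. -/
noncomputable def LstarB
    (m : Module.Dual K A →ₗ[K] Module.Dual K A →ₗ[K] Module.Dual K A) :
    Module.Dual K A →ₗ[K] (A →ₗ[K] A) :=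
  (((Module.evalEquiv K A).symm.conj).toLinearMap :
      Module.End K (Module.Dual K (Module.Dual K A)) →ₗ[K] Module.End K A) ∘ₗ
    (Module.Dual.transpose :
      (Module.Dual K A →ₗ[K] Module.Dual K A) →ₗ[K]
        (Module.Dual K (Module.Dual K A) →ₗ[K] Module.Dual K (Module.Dual K A))) ∘ₗ
    m

/-- For an operation `m` on `A`, the operator `x ↦ L_m(x)*` on `A*`. -/
noncomputable def LstarA (m : A →ₗ[K] A →ₗ[K] A) :
    A →ₗ[K] (Module.Dual K A →ₗ[K] Module.Dual K A) :=
  Module.Dual.transpose ∘ₗ m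

/-- For an operation `m` on `A`, the operator `x ↦ R_m(x)*` on `A*`. -/
noncomputable def RstarA (m : A →ₗ[K] A →ₗ[K] A) :
    A →ₗ[K] (Module.Dual K A →ₗ[K] Module.Dual K A) :=
  Module.Dual.transpose ∘ₗ m.flip

variable {A}

/-- The product `≻_D` of the double `D = A ⊕ A*`:
`(x+a) ≻_D (y+b) = x ≻ y - (R*_≺,A* + R*_≻,A*)(a) y + L*_≺,A*(b) x
  + a ≻_{A*} b - (R*_≺,A + R*_≻,A)(x) b + L*_≺,A(y) a`. -/
noncomputable def succD (sA pA : A →ₗ[K] A →ₗ[K] A)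
    (sB pB : Module.Dual K A →ₗ[K] Module.Dual K A →ₗ[K] Module.Dual K A) :
    (A × Module.Dual K A) →ₗ[K] (A × Module.Dual K A) →ₗ[K] (A × Module.Dual K A) :=
  ((sA.compl₁₂ (LinearMap.fst K A (Module.Dual K A)) (LinearMap.fst K A (Module.Dual K A))).compr₂
      (LinearMap.inl K A (Module.Dual K A)))
    + (((RstarB A pB + RstarB A sB).compl₁₂ (LinearMap.snd K A (Module.Dual K A))
        (LinearMap.fst K A (Module.Dual K A))).compr₂ (-(LinearMap.inl K A (Module.Dual K A))))
    + (((LstarB A pB).flip.compl₁₂ (LinearMap.fst K A (Module.Dual K A))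
        (LinearMap.snd K A (Module.Dual K A))).compr₂ (LinearMap.inl K A (Module.Dual K A)))
    + ((sB.compl₁₂ (LinearMap.snd K A (Module.Dual K A)) (LinearMap.snd K A (Module.Dual K A))).compr₂
        (LinearMap.inr K A (Module.Dual K A)))
    + (((RstarA A pA + RstarA A sA).compl₁₂ (LinearMap.fst K A (Module.Dual K A))
        (LinearMap.snd K A (Module.Dual K A))).compr₂ (-(LinearMap.inr K A (Module.Dual K A))))
    + (((LstarA A pA).flip.compl₁₂ (LinearMap.snd K A (Module.Dual K A))
        (LinearMap.fst K A (Module.Dual K A))).compr₂ (LinearMap.inr K A (Module.Dual K A)))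

/-- The product `≺_D` of the double `D = A ⊕ A*`:
`(x+a) ≺_D (y+b) = x ≺ y + R*_≻,A*(a) y - (L*_≺,A* + L*_≻,A*)(b) x
  + a ≺_{A*} b + R*_≻,A(x) b - (L*_≺,A + L*_≻,A)(y) a`. -/
noncomputable def precD (sA pA : A →ₗ[K] A →ₗ[K] A)
    (sB pB : Module.Dual K A →ₗ[K] Module.Dual K A →ₗ[K] Module.Dual K A) :
    (A × Module.Dual K A) →ₗ[K] (A × Module.Dual K A) →ₗ[K] (A × Module.Dual K A) :=
  ((pA.compl₁₂ (LinearMap.fst K A (Module.Dual K A)) (LinearMap.fst K A (Module.Dual K A))).compr₂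
      (LinearMap.inl K A (Module.Dual K A)))
    + (((RstarB A sB).compl₁₂ (LinearMap.snd K A (Module.Dual K A))
        (LinearMap.fst K A (Module.Dual K A))).compr₂ (LinearMap.inl K A (Module.Dual K A)))
    + (((LstarB A pB + LstarB A sB).flip.compl₁₂ (LinearMap.fst K A (Module.Dual K A))
        (LinearMap.snd K A (Module.Dual K A))).compr₂ (-(LinearMap.inl K A (Module.Dual K A))))
    + ((pB.compl₁₂ (LinearMap.snd K A (Module.Dual K A)) (LinearMap.snd K A (Module.Dual K A))).compr₂
        (LinearMap.inr K A (Module.Dual K A)))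
    + (((RstarA A sA).compl₁₂ (LinearMap.fst K A (Module.Dual K A))
        (LinearMap.snd K A (Module.Dual K A))).compr₂ (LinearMap.inr K A (Module.Dual K A)))
    + (((LstarA A pA + LstarA A sA).flip.compl₁₂ (LinearMap.snd K A (Module.Dual K A))
        (LinearMap.fst K A (Module.Dual K A))).compr₂ (-(LinearMap.inr K A (Module.Dual K A))))

end Double

variable {A : Type*} [AddCommGroup A] [Module K A]

open Module

section TensorToHom

variable {M : Type*} [AddCommGroup M] [Module K M]

@[simp] lemma TmL_zero : TmL (0 : M ⊗[K] M) = 0 := map_zero _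

@[simp] lemma TmL_add (t t' : M ⊗[K] M) : TmL (t + t') = TmL t + TmL t' := map_add _ _ _

@[simp] lemma TmL_sum {ι : Type*} (s : Finset ι) (t : ι → M ⊗[K] M) :
    TmL (∑ i ∈ s, t i) = ∑ i ∈ s, TmL (t i) := map_sum _ _ _

@[simp] lemma TmL_tmul (a b : M) (ζ : Dual K M) : TmL (a ⊗ₜ[K] b) ζ = ζ a • b := by
  simp [TmL, Tbil]

lemma TmL_map_left (f : M →ₗ[K] M) (t : M ⊗[K] M) :
    TmL (map f LinearMap.id t) = TmL t ∘ₗ f.dualMap := by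
  induction t using TensorProduct.induction_on with
  | zero => ext; simp
  | tmul a b => ext; simp
  | add t t' ht ht' => simp [ht, ht', LinearMap.add_comp]

lemma TmL_map_right (g : M →ₗ[K] M) (t : M ⊗[K] M) :
    TmL (map LinearMap.id g t) = g ∘ₗ TmL t := by
  induction t using TensorProduct.induction_on with
  | zero => ext; simp
  | tmul a b => ext; simp
  | add t t' ht ht' => simp [ht, ht', LinearMap.comp_add]

lemma TmL_injective [FiniteDimensional K M] :
    Function.Injective (TmL : M ⊗[K] M → Dual K M →ₗ[K] M) := by
  have hT : (TmL : M ⊗[K] M → Dual K M →ₗ[K] M) =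
      dualTensorHom K (Dual K M) M ∘
        TensorProduct.congr (evalEquiv K M) (LinearEquiv.refl K M) := by
    funext t
    induction t using TensorProduct.induction_on with
    | zero => simp
    | tmul a b => ext; simp [dualTensorHom_apply]
    | add t t' ht ht' => simp_all
  rw [hT]
  exact (dualTensorHom_bijective ..).1.comp (LinearEquiv.injective _)

lemma map_add_map_eq_zero_of_adjoint [FiniteDimensional K M] (e : M ≃ₗ[K] Dual K M)
    {t : M ⊗[K] M} (ht : TmL t = e.symm.toLinearMap) {f g : M →ₗ[K] M}
    (hfg : ∀ v w, e v (f w) = -e (g v) w) :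
    map f LinearMap.id t + map LinearMap.id g t = 0 := by
  apply TmL_injective
  rw [TmL_add, TmL_map_left, TmL_map_right, ht]
  ext ζ : 1
  obtain ⟨v, rfl⟩ := e.surjective ζ
  have hv : f.dualMap (e v) = e (-g v) := by ext w; simp [hfg]
  simp [hv]

end TensorToHom

section Double

@[simp] lemma LstarA_apply_apply (m : A →ₗ[K] A →ₗ[K] A) (x : A) (ζ : Dual K A) (z : A) :
    LstarA A m x ζ z = ζ (m x z) := by
  simp [LstarA, Dual.transpose_apply]

@[simp] lemma RstarA_apply_apply (m : A →ₗ[K] A →ₗ[K] A) (x : A) (ζ : Dual K A) (z : A) :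
    RstarA A m x ζ z = ζ (m z x) := by
  simp [RstarA, Dual.transpose_apply]

variable [FiniteDimensional K A]

@[simp] lemma apply_LstarB_apply (m : Dual K A →ₗ[K] Dual K A →ₗ[K] Dual K A)
    (a ζ : Dual K A) (y : A) : ζ (LstarB A m a y) = m a ζ y := by
  simp [LstarB, LinearEquiv.conj_apply, Dual.transpose_apply]

@[simp] lemma apply_RstarB_apply (m : Dual K A →ₗ[K] Dual K A →ₗ[K] Dual K A)
    (a ζ : Dual K A) (y : A) : ζ (RstarB A m a y) = m ζ a y := by
  simp [RstarB, LinearEquiv.conj_apply, Dual.transpose_apply]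

@[simp] lemma Module.Basis.repr_LstarB_apply {ι : Type*} (b : Basis ι K A)
    (m : Dual K A →ₗ[K] Dual K A →ₗ[K] Dual K A) (a : Dual K A) (y : A) (k : ι) :
    b.repr (LstarB A m a y) k = m a (b.coord k) y := by
  rw [← b.coord_apply, apply_LstarB_apply]

variable (sA pA : A →ₗ[K] A →ₗ[K] A) (sB pB : Dual K A →ₗ[K] Dual K A →ₗ[K] Dual K A)

lemma succD_apply (x y : A) (a c : Dual K A) :
    succD sA pA sB pB (x, a) (y, c)
      = (sA x y - (RstarB A pB a y + RstarB A sB a y) + LstarB A pB c x,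
         sB a c - (RstarA A pA x c + RstarA A sA x c) + LstarA A pA y a) := by
  simp [succD, Prod.ext_iff]
  constructor <;> abel

lemma precD_apply (x y : A) (a c : Dual K A) :
    precD sA pA sB pB (x, a) (y, c)
      = (pA x y + RstarB A sB a y - (LstarB A pB c x + LstarB A sB c x),
         pB a c + RstarA A sA x c - (LstarA A pA y a + LstarA A sA y a)) := by
  simp [precD, Prod.ext_iff]
  constructor <;> abel

variable (K A) in
noncomputable def doublePairing : (A × Dual K A) ≃ₗ[K] Dual K (A × Dual K A) :=
  LinearEquiv.prodComm K A (Dual K A) ≪≫ₗ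
    (LinearEquiv.refl K (Dual K A)).prodCongr (evalEquiv K A) ≪≫ₗ
    dualProdDualEquivDual K A (Dual K A)

@[simp] lemma doublePairing_apply (x y : A) (a c : Dual K A) :
    doublePairing K A (x, a) (y, c) = a y + c x := by
  simp [doublePairing]

lemma doublePairing_precD (u v w : A × Dual K A) :
    doublePairing K A v (precD sA pA sB pB w u)
      = -doublePairing K A ((succD sA pA sB pB + precD sA pA sB pB) u v) w := by
  obtain ⟨x, a⟩ := u; obtain ⟨y, c⟩ := v; obtain ⟨z, d⟩ := w
  simp [succD_apply, precD_apply]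
  ring

lemma doublePairing_succD_add_precD (u v w : A × Dual K A) :
    doublePairing K A v ((succD sA pA sB pB + precD sA pA sB pB) w u)
      = -doublePairing K A (succD sA pA sB pB u v) w := by
  obtain ⟨x, a⟩ := u; obtain ⟨y, c⟩ := v; obtain ⟨z, d⟩ := w
  simp [succD_apply, precD_apply]
  ring

end Double

section Canonical

variable {ι : Type*} [Fintype ι] (b : Basis ι K A)

noncomputable def canonicalTensor : (A × Dual K A) ⊗[K] (A × Dual K A) :=
  ∑ i : ι, ((b i, 0) : A × Dual K A) ⊗ₜ[K] ((0, b.coord i) : A × Dual K A)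

variable [FiniteDimensional K A]

lemma TmL_canonicalTensor_add_tau :
    TmL (canonicalTensor b + tau (canonicalTensor b)) = (doublePairing K A).symm.toLinearMap := by
  suffices h : ∀ v, TmL (canonicalTensor b + tau (canonicalTensor b)) (doublePairing K A v) = v by
    ext ζ : 1
    simpa using h ((doublePairing K A).symm ζ)
  rintro ⟨x, a⟩
  simp [canonicalTensor, tau, Prod.ext_iff, Prod.fst_sum, Prod.snd_sum]

lemma bijective_TmL_canonicalTensor_add_tau :
    Function.Bijective (TmL (canonicalTensor b + tau (canonicalTensor b))) := by
  rw [TmL_canonicalTensor_add_tau]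
  exact (doublePairing K A).symm.bijective

variable (sA pA : A →ₗ[K] A →ₗ[K] A) (sB pB : Dual K A →ₗ[K] Dual K A →ₗ[K] Dual K A)

lemma invariant_canonicalTensor_add_tau :
    Invariant (succD sA pA sB pB) (precD sA pA sB pB)
      (canonicalTensor b + tau (canonicalTensor b)) := fun u =>
  ⟨map_add_map_eq_zero_of_adjoint _ (TmL_canonicalTensor_add_tau b)
      fun v w => doublePairing_precD sA pA sB pB u v w,
    map_add_map_eq_zero_of_adjoint _ (TmL_canonicalTensor_add_tau b)
      fun v w => doublePairing_succD_add_precD sA pA sB pB u v w⟩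

lemma aybe_canonicalTensor :
    AYBE (succD sA pA sB pB) (precD sA pA sB pB) (canonicalTensor b) := by
  classical
  let d := b.prod b.dualBasis
  rw [AYBE, adD, canonicalTensor, sum_tmul]
  simp only [tmul_sum]
  rw [← LinearEquiv.map_eq_zero_iff (d.tensorProduct (d.tensorProduct d)).repr]
  ext ⟨k, l, m⟩
  rcases k with k | k <;> rcases l with l | l <;> rcases m with m | m <;>
    simp [d, place1, place2, place3, succD_apply, precD_apply, Finsupp.single_apply,
      ← sub_eq_add_neg]

end Canonical

theorem stmt15_general [FiniteDimensional K A]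
    (sA pA : A →ₗ[K] A →ₗ[K] A)
    (sB pB : Module.Dual K A →ₗ[K] Module.Dual K A →ₗ[K] Module.Dual K A)
    {ι : Type*} [Fintype ι] (b : Module.Basis ι K A) :
    Invariant (succD sA pA sB pB) (precD sA pA sB pB)
      ((∑ i : ι, ((b i, 0) : A × Module.Dual K A) ⊗ₜ[K]
          ((0, b.coord i) : A × Module.Dual K A)) +
        tau (∑ i : ι, ((b i, 0) : A × Module.Dual K A) ⊗ₜ[K]
          ((0, b.coord i) : A × Module.Dual K A))) ∧
    Function.Bijective
      (TmL ((∑ i : ι, ((b i, 0) : A × Module.Dual K A) ⊗ₜ[K]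
          ((0, b.coord i) : A × Module.Dual K A)) +
        tau (∑ i : ι, ((b i, 0) : A × Module.Dual K A) ⊗ₜ[K]
          ((0, b.coord i) : A × Module.Dual K A)))) ∧
    AYBE (succD sA pA sB pB) (precD sA pA sB pB)
      (∑ i : ι, ((b i, 0) : A × Module.Dual K A) ⊗ₜ[K]
        ((0, b.coord i) : A × Module.Dual K A)) :=
  ⟨invariant_canonicalTensor_add_tau b sA pA sB pB, bijective_TmL_canonicalTensor_add_tau b,
    aybe_canonicalTensor b sA pA sB pB⟩

/-- for an anti-dendriform bialgebra with double `D = A ⊕ A*` and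
`r = Σᵢ eᵢ ⊗ eᵢ*`, the element `r + τ(r)` is invariant in `D`, `T_{r+τ(r)}` is a linear
isomorphism, and `r` solves the AD-YBE; hence the induced bialgebra is factorizable. -/
theorem stmt15 [FiniteDimensional K A]
    (sA pA : A →ₗ[K] A →ₗ[K] A) (hA : IsAntiDend sA pA)
    (sB pB : Module.Dual K A →ₗ[K] Module.Dual K A →ₗ[K] Module.Dual K A)
    (hB : IsAntiDend sB pB)
    (hD : IsAntiDend (succD sA pA sB pB) (precD sA pA sB pB))
    {ι : Type*} [Fintype ι] (b : Module.Basis ι K A) :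
    Invariant (succD sA pA sB pB) (precD sA pA sB pB)
      ((∑ i : ι, ((b i, 0) : A × Module.Dual K A) ⊗ₜ[K]
          ((0, b.coord i) : A × Module.Dual K A)) +
        tau (∑ i : ι, ((b i, 0) : A × Module.Dual K A) ⊗ₜ[K]
          ((0, b.coord i) : A × Module.Dual K A))) ∧
    Function.Bijective
      (TmL ((∑ i : ι, ((b i, 0) : A × Module.Dual K A) ⊗ₜ[K]
          ((0, b.coord i) : A × Module.Dual K A)) +
        tau (∑ i : ι, ((b i, 0) : A × Module.Dual K A) ⊗ₜ[K]
          ((0, b.coord i) : A × Module.Dual K A)))) ∧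
    AYBE (succD sA pA sB pB) (precD sA pA sB pB)
      (∑ i : ι, ((b i, 0) : A × Module.Dual K A) ⊗ₜ[K]
        ((0, b.coord i) : A × Module.Dual K A)) :=
  stmt15_general sA pA sB pB b
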